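/- arXiv:2503.00445 — 4 statements merged into one kernel-verified Lean document; each statement's English description precedes it below -/
import Mathlib

section
/- Let P be a normalized probability distribution on a finite set X, and let Q be a sub-normalized distribution on X with Pd(P,Q) ≤ ε. Then the normalization Q' := Q / (∑_x Q(x)) satisfies Pd(P,Q') ≤ ε and the support of Q' equals the support of Q. -/
open Finset Real

noncomputable def gFid {X : Type*} [Fintype X] (P Q : X → ℝ) : ℝ :=
  (∑ x, Real.sqrt (P x * Q x) +
    Real.sqrt ((1 - ∑ x, P x) * (1 - ∑ x, Q x))) ^ 2

noncomputable def pDist {X : Type*} [Fintype X] (P Q : X → ℝ) : ℝ :=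
  Real.sqrt (1 - gFid P Q)

/-- Normalizing a sub-normalized distribution does not increase the purified
distance to a normalized distribution, and preserves the support. -/
theorem normalized_optimizer {X : Type*} [Fintype X] (P Q : X → ℝ) (ε : ℝ)
    (hP0 : ∀ x, 0 ≤ P x) (hP1 : ∑ x, P x = 1)
    (hQ0 : ∀ x, 0 ≤ Q x) (hQ1 : ∑ x, Q x ≤ 1) (hQpos : 0 < ∑ x, Q x)
    (hPd : pDist P Q ≤ ε) :
    pDist P (fun x => Q x / ∑ y, Q y) ≤ ε ∧
      ∀ x, (Q x / ∑ y, Q y ≠ 0 ↔ Q x ≠ 0) := by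
  set s := ∑ y, Q y with hs
  have hsne : s ≠ 0 := ne_of_gt hQpos
  constructor
  · refine le_trans ?_ hPd
    unfold pDist
    apply Real.sqrt_le_sqrt
    have h1 : gFid P Q ≤ gFid P (fun x => Q x / s) := by
      unfold gFid
      have hsum : ∑ x, Q x / s = 1 := by
        rw [← Finset.sum_div, ← hs, div_self hsne]
      rw [hP1, hsum]
      simp only [sub_self, zero_mul, mul_zero, Real.sqrt_zero, add_zero]
      set T := ∑ x, Real.sqrt (P x * Q x) with hT
      have hT0 : 0 ≤ T := Finset.sum_nonneg fun x _ => Real.sqrt_nonneg _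
      have hTeq : ∑ x, Real.sqrt (P x * (Q x / s)) = T / Real.sqrt s := by
        rw [hT, Finset.sum_div]
        refine Finset.sum_congr rfl fun x _ => ?_
        rw [← mul_div_assoc, Real.sqrt_div (mul_nonneg (hP0 x) (hQ0 x))]
      rw [hTeq, div_pow, Real.sq_sqrt (le_of_lt hQpos)]
      rw [le_div_iff₀ hQpos]
      nlinarith [sq_nonneg T]
    linarith
  · intro x
    constructor
    · intro h hx; exact h (by simp [hx])
    · intro h hd
      rcases div_eq_zero_iff.mp hd with h' | h'
      · exact h h'
      · exact hsne h'
end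

section
/- Let P be a normalized distribution on a finite set X and 0 < ε < 1. Define the ε-smooth Hartley entropy H₀^ε(P) as the infimum of log₂|supp(Q)| over all sub-normalized Q with Pd(P,Q) ≤ ε. Then H₀^ε(P) = log₂(k*), where k* is the least integer k such that the sum of the k largest values of P is at least 1 - ε². -/
open Finset Real

/-- Hartley entropy: log₂ of the size of the support. -/
noncomputable def H0 {X : Type*} [Fintype X] (P : X → ℝ) : ℝ :=
  Real.logb 2 ((Finset.univ.filter (fun x => P x ≠ 0)).card)

/-- ε-smooth Hartley entropy (purified-distance smoothing over
sub-normalized distributions). -/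
noncomputable def H0eps {X : Type*} [Fintype X] (ε : ℝ) (P : X → ℝ) : ℝ :=
  sInf {h : ℝ | ∃ Q : X → ℝ, (∀ x, 0 ≤ Q x) ∧ (∑ x, Q x) ≤ 1 ∧
    pDist P Q ≤ ε ∧ h = H0 Q}

/-- The smooth Hartley entropy equals `log₂ k*`, where `k*` is the least number of
elements whose total `P`-weight is at least `1 - ε²`. -/
theorem smooth_hartley_characterization {X : Type*} [Fintype X]
    (P : X → ℝ) (ε : ℝ) (hε0 : 0 < ε) (hε1 : ε < 1)
    (hP0 : ∀ x, 0 ≤ P x) (hP1 : ∑ x, P x = 1) :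
    H0eps ε P =
      Real.logb 2
        ((sInf {k : ℕ | ∃ S : Finset X, S.card = k ∧ 1 - ε ^ 2 ≤ ∑ x ∈ S, P x} : ℕ) : ℝ) := by
  classical
  have hb : (1:ℝ) < 2 := one_lt_two
  have hε2 : ε ^ 2 < 1 := by nlinarith
  set A : Set ℕ := {k : ℕ | ∃ S : Finset X, S.card = k ∧ 1 - ε ^ 2 ≤ ∑ x ∈ S, P x} with hA
  have hAne : A.Nonempty :=
    ⟨(Finset.univ : Finset X).card, Finset.univ, rfl, by rw [hP1]; nlinarith⟩
  obtain ⟨S, hScard, hSsum⟩ := Nat.sInf_mem hAne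
  have hspos : (0:ℝ) < ∑ x ∈ S, P x := lt_of_lt_of_le (by nlinarith) hSsum
  have hk1 : 1 ≤ sInf A := by
    rcases Nat.eq_zero_or_pos (sInf A) with h | h
    · rw [h, Finset.card_eq_zero] at hScard
      rw [hScard, Finset.sum_empty] at hspos
      exact absurd hspos (lt_irrefl 0)
    · exact h
  -- Key lemma: any feasible Q has support whose P-weight is at least 1 - ε².
  have key : ∀ Q : X → ℝ, (∀ x, 0 ≤ Q x) → (∑ x, Q x) ≤ 1 → pDist P Q ≤ ε →
      1 - ε ^ 2 ≤ ∑ x ∈ Finset.univ.filter (fun x => Q x ≠ 0), P x := by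
    intro Q hQnn hQs hPd
    set T := Finset.univ.filter (fun x => Q x ≠ 0) with hT
    have hF : 1 - ε ^ 2 ≤ gFid P Q := by
      rcases le_or_gt (1 - gFid P Q) 0 with h | h
      · nlinarith
      · have h1 : Real.sqrt (1 - gFid P Q) ≤ ε := hPd
        nlinarith [Real.sq_sqrt h.le, Real.sqrt_nonneg (1 - gFid P Q)]
    have hQzero : ∀ x ∈ Finset.univ, x ∉ T → Real.sqrt (P x * Q x) = 0 := by
      intro x _ hx
      have : Q x = 0 := by simpa [hT] using hx
      simp [this]
    have h1 : ∑ x, Real.sqrt (P x * Q x) = ∑ x ∈ T, Real.sqrt (P x * Q x) :=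
      (Finset.sum_subset (Finset.subset_univ T) hQzero).symm
    have hCS : (∑ x ∈ T, Real.sqrt (P x * Q x)) ^ 2 ≤ (∑ x ∈ T, P x) * (∑ x ∈ T, Q x) := by
      have h2 := Finset.sum_mul_sq_le_sq_mul_sq T
        (fun x => Real.sqrt (P x)) (fun x => Real.sqrt (Q x))
      calc (∑ x ∈ T, Real.sqrt (P x * Q x)) ^ 2
          = (∑ x ∈ T, Real.sqrt (P x) * Real.sqrt (Q x)) ^ 2 := by
            congr 1
            exact Finset.sum_congr rfl fun x _ => Real.sqrt_mul (hP0 x) _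
        _ ≤ (∑ x ∈ T, Real.sqrt (P x) ^ 2) * ∑ x ∈ T, Real.sqrt (Q x) ^ 2 := h2
        _ = (∑ x ∈ T, P x) * (∑ x ∈ T, Q x) := by
            congr 1
            · exact Finset.sum_congr rfl fun x _ => Real.sq_sqrt (hP0 x)
            · exact Finset.sum_congr rfl fun x _ => Real.sq_sqrt (hQnn x)
    have hTQ : ∑ x ∈ T, Q x ≤ 1 := le_trans (Finset.sum_le_univ_sum_of_nonneg hQnn) hQs
    have hTP : 0 ≤ ∑ x ∈ T, P x := Finset.sum_nonneg fun x _ => hP0 x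
    have hgf : gFid P Q = (∑ x ∈ T, Real.sqrt (P x * Q x)) ^ 2 := by
      unfold gFid
      rw [hP1, h1]
      simp
    calc 1 - ε ^ 2 ≤ gFid P Q := hF
      _ = (∑ x ∈ T, Real.sqrt (P x * Q x)) ^ 2 := hgf
      _ ≤ (∑ x ∈ T, P x) * (∑ x ∈ T, Q x) := hCS
      _ ≤ ∑ x ∈ T, P x := mul_le_of_le_one_right hTP hTQ
  -- The witness Q₀: P restricted to S and renormalized.
  set s : ℝ := ∑ x ∈ S, P x with hs
  set Q0 : X → ℝ := fun x => if x ∈ S then P x / s else 0 with hQ0def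
  have hQ0nn : ∀ x, 0 ≤ Q0 x := by
    intro x
    by_cases h : x ∈ S <;> simp only [hQ0def, if_pos, if_neg, h, ite_true, ite_false]
    · exact div_nonneg (hP0 x) hspos.le
    · exact le_refl 0
  have hQ0sum : ∑ x, Q0 x = 1 := by
    rw [hQ0def]
    simp only [Finset.sum_ite_mem, Finset.univ_inter]
    rw [← Finset.sum_div, ← hs, div_self hspos.ne']
  have hsum0 : ∑ x, Real.sqrt (P x * Q0 x) = Real.sqrt s := by
    have h1 : ∑ x, Real.sqrt (P x * Q0 x) = ∑ x ∈ S, Real.sqrt (P x * Q0 x) :=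
      (Finset.sum_subset (Finset.subset_univ S) (by
        intro x _ hx
        simp [hQ0def, hx])).symm
    have h2 : ∀ x ∈ S, Real.sqrt (P x * Q0 x) = P x / Real.sqrt s := by
      intro x hx
      rw [hQ0def]
      simp only [if_pos hx]
      rw [mul_div_assoc', Real.sqrt_div (mul_nonneg (hP0 x) (hP0 x)),
        Real.sqrt_mul_self (hP0 x)]
    rw [h1, Finset.sum_congr rfl h2, ← Finset.sum_div, ← hs, Real.div_sqrt]
  have hgF : gFid P Q0 = s := by
    unfold gFid
    rw [hsum0, hP1]
    simp [Real.sq_sqrt hspos.le]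
  have hPd0 : pDist P Q0 ≤ ε := by
    unfold pDist
    rw [hgF]
    calc Real.sqrt (1 - s) ≤ Real.sqrt (ε ^ 2) := Real.sqrt_le_sqrt (by linarith [hSsum])
      _ = ε := Real.sqrt_sq hε0.le
  have hsupp : (Finset.univ.filter fun x => Q0 x ≠ 0) ⊆ S := by
    intro x hx
    by_contra h
    simp [hQ0def, h] at hx
  have hcard : (Finset.univ.filter fun x => Q0 x ≠ 0).card ≤ sInf A :=
    hScard ▸ Finset.card_le_card hsupp
  have hkpos : (0:ℝ) < (Nat.cast (sInf A) : ℝ) := by exact_mod_cast hk1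
  have hH0le : H0 Q0 ≤ Real.logb 2 (Nat.cast (sInf A) : ℝ) := by
    unfold H0
    rcases Nat.eq_zero_or_pos (Finset.univ.filter fun x => Q0 x ≠ 0).card with h | h
    · rw [h]
      simpa using Real.logb_nonneg hb (by exact_mod_cast hk1)
    · exact Real.logb_le_logb_of_le hb (by exact_mod_cast h) (by exact_mod_cast hcard)
  have hEne : {h : ℝ | ∃ Q : X → ℝ, (∀ x, 0 ≤ Q x) ∧ (∑ x, Q x) ≤ 1 ∧
      pDist P Q ≤ ε ∧ h = H0 Q}.Nonempty :=
    ⟨H0 Q0, Q0, hQ0nn, hQ0sum.le, hPd0, rfl⟩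
  have hEbdd : BddBelow {h : ℝ | ∃ Q : X → ℝ, (∀ x, 0 ≤ Q x) ∧ (∑ x, Q x) ≤ 1 ∧
      pDist P Q ≤ ε ∧ h = H0 Q} := by
    refine ⟨0, ?_⟩
    rintro h ⟨Q, _, _, _, rfl⟩
    unfold H0
    rcases Nat.eq_zero_or_pos (Finset.univ.filter fun x => Q x ≠ 0).card with h | h
    · simp [h]
    · exact Real.logb_nonneg hb (by exact_mod_cast h)
  rw [H0eps]
  apply le_antisymm
  · exact le_trans (csInf_le hEbdd ⟨Q0, hQ0nn, hQ0sum.le, hPd0, rfl⟩) hH0le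
  · refine le_csInf hEne ?_
    rintro h ⟨Q, hQnn, hQs, hPd, rfl⟩
    have hk := key Q hQnn hQs hPd
    have hmem : (Finset.univ.filter fun x => Q x ≠ 0).card ∈ A := ⟨_, rfl, hk⟩
    have hle : sInf A ≤ (Finset.univ.filter fun x => Q x ≠ 0).card := Nat.sInf_le hmem
    unfold H0
    exact Real.logb_le_logb_of_le hb hkpos (by exact_mod_cast hle)
end

section
/- Let P be a normalized distribution on a finite set X, let 0 < ε < 1, and let Q be any sub-normalized distribution whose support has cardinality m. If the sum of the m largest values of P is strictly less than 1 - ε², then Pd(P,Q) > ε. -/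
open Finset Real

/-- If every `m`-element subset of `X` has `P`-weight strictly below `1 - ε²`, then
any sub-normalized distribution whose support has `m` elements is at purified
distance more than `ε` from `P`. -/
theorem converse_calcRank {X : Type*} [Fintype X]
    (P Q : X → ℝ) (ε : ℝ) (m : ℕ)
    (hε0 : 0 < ε) (hε1 : ε < 1)
    (hP0 : ∀ x, 0 ≤ P x) (hP1 : ∑ x, P x = 1)
    (hQ0 : ∀ x, 0 ≤ Q x) (hQ1 : ∑ x, Q x ≤ 1)
    (hm : (Finset.univ.filter (fun x => Q x ≠ 0)).card = m)
    (hsmall : ∀ S : Finset X, S.card = m → ∑ x ∈ S, P x < 1 - ε ^ 2) :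
    ε < pDist P Q := by
  set S := Finset.univ.filter (fun x => Q x ≠ 0) with hS
  have hsum : ∑ x, Real.sqrt (P x * Q x) = ∑ x ∈ S, Real.sqrt (P x) * Real.sqrt (Q x) := by
    rw [← Finset.sum_filter_of_ne (p := fun x => Q x ≠ 0)]
    · exact Finset.sum_congr rfl fun x _ => Real.sqrt_mul (hP0 x) _
    · intro x _ h hQ
      simp [hQ] at h
  have hCS : (∑ x ∈ S, Real.sqrt (P x) * Real.sqrt (Q x)) ^ 2 ≤
      (∑ x ∈ S, P x) * (∑ x ∈ S, Q x) := by
    have h := Finset.sum_mul_sq_le_sq_mul_sq S (fun x => Real.sqrt (P x)) (fun x => Real.sqrt (Q x))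
    simpa [Real.sq_sqrt (hP0 _), Real.sq_sqrt (hQ0 _)] using h
  have hQS : ∑ x ∈ S, Q x ≤ 1 := le_trans (Finset.sum_le_sum_of_subset_of_nonneg
    (Finset.subset_univ S) (fun x _ _ => hQ0 x)) hQ1
  have hQSnn : 0 ≤ ∑ x ∈ S, Q x := Finset.sum_nonneg fun x _ => hQ0 x
  have hPSnn : 0 ≤ ∑ x ∈ S, P x := Finset.sum_nonneg fun x _ => hP0 x
  have hPS : ∑ x ∈ S, P x < 1 - ε ^ 2 := hsmall S hm
  have hF : gFid P Q < 1 - ε ^ 2 := by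
    rw [gFid, hP1]
    simp only [sub_self, zero_mul, Real.sqrt_zero, add_zero]
    calc (∑ x, Real.sqrt (P x * Q x)) ^ 2
        ≤ (∑ x ∈ S, P x) * (∑ x ∈ S, Q x) := by rw [hsum]; exact hCS
      _ ≤ (∑ x ∈ S, P x) * 1 := mul_le_mul_of_nonneg_left hQS hPSnn
      _ < 1 - ε ^ 2 := by rw [mul_one]; exact hPS
  rw [pDist]
  rw [show ε = Real.sqrt (ε ^ 2) by rw [Real.sqrt_sq hε0.le]]
  exact Real.sqrt_lt_sqrt (sq_nonneg ε) (by linarith)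
end

section
/- Let P be a normalized distribution on a finite set X and 0 < ε < 1. Let S be a set of k elements of X carrying the k largest weights of P with ∑_{x∈S} P(x) ≥ 1 - ε². Then the conditional distribution Q of P on S satisfies Pd(P,Q) ≤ ε and |supp(Q)| ≤ k. -/
open Finset Real

/-- Achievability: conditioning a normalized `P` on a set `S` of the `k` largest
weights with `P(S) ≥ 1 - ε²` gives a distribution within purified distance `ε`
of `P`, with support of size at most `k`. -/
theorem achievability_calcRank {X : Type*} [Fintype X] [DecidableEq X]
    (P : X → ℝ) (S : Finset X) (k : ℕ) (ε : ℝ)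
    (hε0 : 0 < ε) (hε1 : ε < 1)
    (hP0 : ∀ x, 0 ≤ P x) (hP1 : ∑ x, P x = 1)
    (hk : S.card = k)
    (hlargest : ∀ x ∈ S, ∀ y ∉ S, P y ≤ P x)
    (hS : 1 - ε ^ 2 ≤ ∑ x ∈ S, P x) :
    pDist P (fun x => if x ∈ S then P x / ∑ y ∈ S, P y else 0) ≤ ε ∧
      (Finset.univ.filter
        (fun x => (if x ∈ S then P x / ∑ y ∈ S, P y else 0) ≠ 0)).card ≤ k := by
  set s := ∑ y ∈ S, P y with hs_def
  have hs0 : 0 < s := lt_of_lt_of_le (by nlinarith) hS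
  have hs1 : s ≤ 1 := by
    rw [← hP1]
    exact Finset.sum_le_sum_of_subset_of_nonneg (Finset.subset_univ S)
      (fun x _ _ => hP0 x)
  constructor
  · -- sum of Q is 1
    have hQsum : ∑ x, (if x ∈ S then P x / s else 0) = 1 := by
      rw [Finset.sum_ite_mem, Finset.univ_inter, ← Finset.sum_div]
      exact div_self hs0.ne'
    have hfid : ∑ x, Real.sqrt (P x * (if x ∈ S then P x / s else 0)) = Real.sqrt s := by
      have : ∀ x, Real.sqrt (P x * (if x ∈ S then P x / s else 0)) =
          (if x ∈ S then P x / Real.sqrt s else 0) := by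
        intro x
        by_cases hx : x ∈ S
        · simp only [hx, if_true]
          rw [show P x * (P x / s) = (P x)^2 / s by ring]
          rw [Real.sqrt_div (by positivity), Real.sqrt_sq (hP0 x)]
        · simp [hx]
      rw [Finset.sum_congr rfl (fun x _ => this x), Finset.sum_ite_mem,
        Finset.univ_inter, ← Finset.sum_div, ← hs_def]
      rw [eq_comm, eq_div_iff (by positivity), Real.mul_self_sqrt hs0.le]
    unfold pDist gFid
    rw [hfid, hQsum, hP1]
    simp only [sub_self, zero_mul, Real.sqrt_zero, add_zero]
    rw [Real.sq_sqrt hs0.le]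
    calc Real.sqrt (1 - s) ≤ Real.sqrt (ε ^ 2) := by
          apply Real.sqrt_le_sqrt; linarith
      _ = ε := by rw [Real.sqrt_sq hε0.le]
  · rw [← hk]
    apply Finset.card_le_card
    intro x hx
    simp only [Finset.mem_filter] at hx
    by_contra h
    exact hx.2 (by simp [h])
end
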